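/- Let G be a locally compact group and K, L ⊆ G two compact totally disconnected subgroups each of whose normalizer N(K), N(L) is open in G with N(K)/K and N(L)/L Lie groups (i.e., K and L are basic compact subgroups of a moderate group). Then K and L are commensurable: K ∩ L has finite index in both K and L. -/

import Mathlib

/-!
The squaring map of a Lie group has derivative `2 • id` at the identity, so in a chart around `1`
it pushes every point near `1` away from `1` by a factor of at least `3/2`. Hence a small enough
neighbourhood of `1` contains no nontrivial subgroup. A compact totally disconnected group has a
basis of open subgroups at `1`, so a continuous homomorphism from it into a Lie group has open
kernel. Applied to `N(K) ∩ L → N(K)/K`, this makes `K ∩ L` open, hence of finite index, in the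
compact group `N(K) ∩ L`, which is itself open, hence of finite index, in `L`.
-/

open scoped Manifold Topology
open Set Filter

theorem le_of_mul_le_succ_of_bddAbove {r : ℕ → ℝ} {b : ℝ} (hb : 1 < b)
    (hstep : ∀ n, b * r n ≤ r (n + 1)) (hbdd : BddAbove (range r)) : r 0 ≤ 0 := by
  have hgrow : ∀ n, b ^ n * r 0 ≤ r n := by
    intro n
    induction n with
    | zero => simp
    | succ n ih =>
      calc b ^ (n + 1) * r 0 = b * (b ^ n * r 0) := by ring
        _ ≤ b * r n := by gcongr
        _ ≤ r (n + 1) := hstep n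
  by_contra! hpos
  obtain ⟨C, hC⟩ := hbdd
  obtain ⟨n, hn⟩ := pow_unbounded_of_one_lt (C / r 0) hb
  rw [div_lt_iff₀ hpos] at hn
  linarith [hgrow n, hC (mem_range_self n)]

section RepellingFixedPoint

variable {E E' : Type*} [NormedAddCommGroup E] [NormedSpace ℝ E]
  [NormedAddCommGroup E'] [NormedSpace ℝ E']

theorem HasFDerivWithinAt.eventually_mul_norm_sub_le {F : E → E'} {D : E →L[ℝ] E'}
    {s : Set E} {c : E} {a b : ℝ} (hF : HasFDerivWithinAt F D s c)
    (hD : ∀ v, a * ‖v‖ ≤ ‖D v‖) (hba : b < a) :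
    ∀ᶠ y in 𝓝[s] c, b * ‖y - c‖ ≤ ‖F y - F c‖ := by
  filter_upwards [hF.isLittleO.bound (sub_pos.mpr hba)] with y hy
  have := norm_sub_norm_le (D (y - c)) (F y - F c)
  rw [norm_sub_rev (D (y - c))] at this
  nlinarith [hD (y - c)]

theorem HasFDerivWithinAt.exists_mem_nhdsWithin_orbit_eq {F : E → E} {D : E →L[ℝ] E}
    {s : Set E} {c : E} {a : ℝ} (hF : HasFDerivWithinAt F D s c) (hFc : F c = c)
    (ha : 1 < a) (hD : ∀ v, a * ‖v‖ ≤ ‖D v‖) :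
    ∃ t ∈ 𝓝[s] c, ∀ y : ℕ → E, (∀ n, y n ∈ t) → (∀ n, y (n + 1) = F (y n)) → y 0 = c := by
  refine ⟨{y | (1 + a) / 2 * ‖y - c‖ ≤ ‖F y - F c‖} ∩ Metric.ball c 1,
    inter_mem (hF.eventually_mul_norm_sub_le hD (by linarith))
      (mem_nhdsWithin_of_mem_nhds (Metric.ball_mem_nhds c one_pos)), fun y hyt hyF => ?_⟩
  have hstep : ∀ n, (1 + a) / 2 * ‖y n - c‖ ≤ ‖y (n + 1) - c‖ := fun n => by
    have h := (hyt n).1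
    rwa [mem_ofPred_eq, hFc, ← hyF] at h
  have hbdd : BddAbove (range fun n => ‖y n - c‖) :=
    ⟨1, forall_mem_range.mpr fun n => (mem_ball_iff_norm.mp (hyt n).2).le⟩
  have := le_of_mul_le_succ_of_bddAbove (by linarith) hstep hbdd
  exact sub_eq_zero.mp (norm_le_zero_iff.mp this)

end RepellingFixedPoint

section LieGroup

variable {E H Q : Type*} [NormedAddCommGroup E] [NormedSpace ℝ E] [TopologicalSpace H]
  (I : ModelWithCorners ℝ E H) [TopologicalSpace Q] [ChartedSpace H Q]

theorem mfderiv_mul_self_one_apply [Monoid Q] [ContMDiffMul I 1 Q] (v : E) :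
    mfderiv I I (fun x : Q => x * x) 1 v = v + v := by
  have hmul : MDifferentiableAt (I.prod I) I (fun p : Q × Q => p.1 * p.2) (1, 1) :=
    (contMDiff_mul I 1).mdifferentiableAt one_ne_zero
  have hdiag : MDifferentiableAt I (I.prod I) (fun x : Q => (x, x)) 1 :=
    mdifferentiableAt_id.prodMk mdifferentiableAt_id
  have hpartial := mfderiv_prod_eq_add_comp hmul
  rw [show (fun z : Q => z * 1) = id from funext mul_one,
    show (fun z : Q => 1 * z) = id from funext one_mul, mfderiv_id] at hpartial
  have hdiag' : mfderiv I (I.prod I) (fun x : Q => (x, x)) 1 =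
      (mfderiv I I (fun x : Q => x) 1).prod (mfderiv I I (fun x : Q => x) 1) :=
    mdifferentiableAt_id.mfderiv_prod mdifferentiableAt_id
  have hcomp := mfderiv_comp (g := fun p : Q × Q => p.1 * p.2) (f := fun x : Q => (x, x)) 1
    hmul hdiag
  rw [hdiag', hpartial, show (fun x : Q => x) = id from rfl, mfderiv_id] at hcomp
  rw [show (fun x : Q => x * x) = (fun p : Q × Q => p.1 * p.2) ∘ (fun x : Q => (x, x)) from rfl,
    hcomp]
  rfl

theorem exists_nhds_one_forall_pow_two_pow_mem_imp_eq_one [Monoid Q] [ContMDiffMul I 1 Q] :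
    ∃ V ∈ 𝓝 (1 : Q), ∀ x : Q, (∀ n : ℕ, x ^ 2 ^ n ∈ V) → x = 1 := by
  set φ := extChartAt I (1 : Q)
  set F := writtenInExtChartAt I I 1 (fun x : Q => x * x)
  set D : E →L[ℝ] E := mfderiv I I (fun x : Q => x * x) 1
  have hsq : MDifferentiableAt I I (fun x : Q => x * x) 1 :=
    ((contMDiff_mul I 1).mdifferentiableAt one_ne_zero).comp 1
      (mdifferentiableAt_id.prodMk mdifferentiableAt_id)
  have hF : HasFDerivWithinAt F D (range I) (φ 1) := hsq.hasMFDerivAt.2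
  have hF_sq : ∀ x ∈ φ.source, F (φ x) = φ (x * x) := fun x hx => by
    change extChartAt I (1 * 1) (φ.symm (φ x) * φ.symm (φ x)) = φ (x * x)
    rw [φ.left_inv hx, mul_one]
  have hD : ∀ v : E, 2 * ‖v‖ ≤ ‖D v‖ := fun v => by
    rw [show D v = v + v from mfderiv_mul_self_one_apply I v, ← two_smul ℝ v, norm_smul,
      Real.norm_two]
  obtain ⟨t, ht, horbit⟩ := hF.exists_mem_nhdsWithin_orbit_eq
    (by rw [hF_sq 1 (mem_extChartAt_source 1), mul_one]) one_lt_two hD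
  refine ⟨φ.source ∩ φ ⁻¹' t, inter_mem (extChartAt_source_mem_nhds 1)
    (extChartAt_preimage_mem_nhds_of_mem_nhdsWithin (mem_extChartAt_source 1) ht), fun x hx => ?_⟩
  have h0 := horbit (fun n => φ (x ^ 2 ^ n)) (fun n => (hx n).2) fun n => by
    rw [hF_sq _ (hx n).1, ← pow_two, ← pow_mul, ← pow_succ]
  simpa using φ.injOn (hx 0).1 (mem_extChartAt_source 1) h0

theorem exists_nhds_one_forall_subgroup_subset_eq_bot [Group Q] [ContMDiffMul I 1 Q] :
    ∃ V ∈ 𝓝 (1 : Q), ∀ S : Subgroup Q, (S : Set Q) ⊆ V → S = ⊥ := by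
  obtain ⟨V, hV, hpow⟩ := exists_nhds_one_forall_pow_two_pow_mem_imp_eq_one I (Q := Q)
  exact ⟨V, hV, fun S hS => (Subgroup.eq_bot_iff_forall S).mpr fun x hx =>
    hpow x fun n => hS (S.pow_mem hx _)⟩

theorem MonoidHom.isOpen_ker_of_continuous {P : Type*} [Group P] [TopologicalSpace P]
    [IsTopologicalGroup P] [CompactSpace P] [TotallyDisconnectedSpace P] [Group Q]
    [ContMDiffMul I 1 Q] (ψ : P →* Q) (hψ : Continuous ψ) : IsOpen (ψ.ker : Set P) := by
  obtain ⟨V, hV, hnss⟩ := exists_nhds_one_forall_subgroup_subset_eq_bot I (Q := Q)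
  obtain ⟨U, hUV, hUo, hU1⟩ :=
    mem_nhds_iff.mp (hψ.continuousAt.preimage_mem_nhds (ψ.map_one ▸ hV))
  obtain ⟨O, hOU⟩ := ProfiniteGrp.exist_openNormalSubgroup_sub_open_nhds_of_one hUo hU1
  have hOker : O.toSubgroup ≤ ψ.ker :=
    (Subgroup.map_eq_bot_iff _).mp <| hnss _ <| by
      rintro _ ⟨p, hp, rfl⟩
      exact hUV (hOU hp)
  exact Subgroup.isOpen_mono hOker O.isOpen'

end LieGroup

theorem Function.Injective.totallyDisconnectedSpace {X Y : Type*} [TopologicalSpace X]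
    [TopologicalSpace Y] [TotallyDisconnectedSpace Y] {f : X → Y} (hf : Function.Injective f)
    (hc : Continuous f) : TotallyDisconnectedSpace X :=
  ⟨fun _ _ hs => hf.subsingleton_image_iff.mp (hs.image f hc.continuousOn).subsingleton⟩

namespace Subgroup

variable {G : Type*} [Group G] [TopologicalSpace G] [IsTopologicalGroup G]

theorem index_ne_zero_of_isOpen [CompactSpace G] {U : Subgroup G} (hU : IsOpen (U : Set G)) :
    U.index ≠ 0 :=
  haveI := quotient_finite_of_isOpen U hU
  index_ne_zero_of_finite

theorem relIndex_ne_zero_of_isOpen_of_isCompact {U L : Subgroup G} (hU : IsOpen (U : Set G))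
    (hL : IsCompact (L : Set G)) : U.relIndex L ≠ 0 :=
  haveI := isCompact_iff_compactSpace.mp hL
  index_ne_zero_of_isOpen (hU.preimage continuous_subtype_val)

theorem inf_relIndex_ne_zero_of_isOpen_of_isCompact {E H : Type*} [NormedAddCommGroup E]
    [NormedSpace ℝ E] [TopologicalSpace H] {K N L : Subgroup G} (hKN : K ≤ N)
    [(K.subgroupOf N).Normal] (hN : IsOpen (N : Set G)) (hL : IsCompact (L : Set G))
    [TotallyDisconnectedSpace L] (I : ModelWithCorners ℝ E H)
    [ChartedSpace H (N ⧸ K.subgroupOf N)] [ContMDiffMul I 1 (N ⧸ K.subgroupOf N)] :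
    (K ⊓ L).relIndex L ≠ 0 := by
  have hNL : N.relIndex L ≠ 0 := relIndex_ne_zero_of_isOpen_of_isCompact hN hL
  have hKNL : K.relIndex (N ⊓ L) ≠ 0 := by
    have : CompactSpace ↥(N ⊓ L) := isCompact_iff_compactSpace.mp <| by
      simpa only [coe_inf] using hL.inter_left (N.isClosed_of_isOpen hN)
    have : TotallyDisconnectedSpace ↥(N ⊓ L) :=
      (inclusion_injective inf_le_right).totallyDisconnectedSpace
        (continuous_inclusion inf_le_right)
    let ψ := (QuotientGroup.mk' (K.subgroupOf N)).comp (inclusion (inf_le_left : N ⊓ L ≤ N))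
    have hker : ψ.ker = K.subgroupOf (N ⊓ L) := by
      ext p
      simp [ψ, mem_subgroupOf]
    rw [relIndex, ← hker]
    exact index_ne_zero_of_isOpen (MonoidHom.isOpen_ker_of_continuous I ψ
      (continuous_quotient_mk'.comp (continuous_inclusion inf_le_left)))
  rw [inf_relIndex_right, ← inf_of_le_left hKN, ← relIndex_inf_mul_relIndex]
  exact mul_ne_zero hKNL hNL

end Subgroup

theorem stmt7_general {G : Type*} [Group G] [TopologicalSpace G] [IsTopologicalGroup G]
    (K L : Subgroup G)
    (hKc : IsCompact (K : Set G)) (hLc : IsCompact (L : Set G))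
    (hKtd : TotallyDisconnectedSpace K) (hLtd : TotallyDisconnectedSpace L)
    (hKn : IsOpen ((Subgroup.normalizer (K : Set G)) : Set G)) (hLn : IsOpen ((Subgroup.normalizer (L : Set G)) : Set G))
    {E₁ H₁ : Type*} [NormedAddCommGroup E₁] [NormedSpace ℝ E₁] [TopologicalSpace H₁]
    (I₁ : ModelWithCorners ℝ E₁ H₁)
    [ChartedSpace H₁ ((Subgroup.normalizer (K : Set G)) ⧸ K.subgroupOf (Subgroup.normalizer (K : Set G)))]
    [LieGroup I₁ (⊤ : ℕ∞) ((Subgroup.normalizer (K : Set G)) ⧸ K.subgroupOf (Subgroup.normalizer (K : Set G)))]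
    {E₂ H₂ : Type*} [NormedAddCommGroup E₂] [NormedSpace ℝ E₂] [TopologicalSpace H₂]
    (I₂ : ModelWithCorners ℝ E₂ H₂)
    [ChartedSpace H₂ ((Subgroup.normalizer (L : Set G)) ⧸ L.subgroupOf (Subgroup.normalizer (L : Set G)))]
    [LieGroup I₂ (⊤ : ℕ∞) ((Subgroup.normalizer (L : Set G)) ⧸ L.subgroupOf (Subgroup.normalizer (L : Set G)))] :
    ((K ⊓ L).subgroupOf K).FiniteIndex ∧ ((K ⊓ L).subgroupOf L).FiniteIndex := by
  refine ⟨⟨?_⟩, ⟨?_⟩⟩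
  · rw [inf_comm]
    exact Subgroup.inf_relIndex_ne_zero_of_isOpen_of_isCompact Subgroup.le_normalizer hLn hKc I₂
  · exact Subgroup.inf_relIndex_ne_zero_of_isOpen_of_isCompact Subgroup.le_normalizer hKn hLc I₁

/-- Two basic compact subgroups of a moderate locally compact group are commensurable:
if `K, L ≤ G` are compact totally disconnected subgroups whose normalizers are open and
such that each quotient (normalizer of the subgroup modulo the subgroup) is a real
Lie group, then `K ∩ L` has finite index in both `K` and `L`. -/
theorem stmt7 {G : Type*} [Group G] [TopologicalSpace G] [IsTopologicalGroup G]
    [LocallyCompactSpace G]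
    (K L : Subgroup G)
    (hKc : IsCompact (K : Set G)) (hLc : IsCompact (L : Set G))
    (hKtd : TotallyDisconnectedSpace K) (hLtd : TotallyDisconnectedSpace L)
    (hKn : IsOpen ((Subgroup.normalizer (K : Set G)) : Set G)) (hLn : IsOpen ((Subgroup.normalizer (L : Set G)) : Set G))
    {E₁ H₁ : Type*} [NormedAddCommGroup E₁] [NormedSpace ℝ E₁] [TopologicalSpace H₁]
    (I₁ : ModelWithCorners ℝ E₁ H₁)
    [ChartedSpace H₁ ((Subgroup.normalizer (K : Set G)) ⧸ K.subgroupOf (Subgroup.normalizer (K : Set G)))]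
    [LieGroup I₁ (⊤ : ℕ∞) ((Subgroup.normalizer (K : Set G)) ⧸ K.subgroupOf (Subgroup.normalizer (K : Set G)))]
    {E₂ H₂ : Type*} [NormedAddCommGroup E₂] [NormedSpace ℝ E₂] [TopologicalSpace H₂]
    (I₂ : ModelWithCorners ℝ E₂ H₂)
    [ChartedSpace H₂ ((Subgroup.normalizer (L : Set G)) ⧸ L.subgroupOf (Subgroup.normalizer (L : Set G)))]
    [LieGroup I₂ (⊤ : ℕ∞) ((Subgroup.normalizer (L : Set G)) ⧸ L.subgroupOf (Subgroup.normalizer (L : Set G)))] :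
    ((K ⊓ L).subgroupOf K).FiniteIndex ∧ ((K ⊓ L).subgroupOf L).FiniteIndex :=
  stmt7_general K L hKc hLc hKtd hLtd hKn hLn I₁ I₂
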